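/- Let x ≥ 2 and α ≥ 1/log x be real numbers. Then there is an absolute constant C such that ∑_{p ≤ x} (1/p − 1/p^{1+α}) ≤ 1 + log(α log x) + C for all x ≥ 2 and α ≥ 1/log x. -/

import Mathlib

open Finset Real Nat

private def Pset (n : ℕ) : Finset ℕ := (Finset.range (n+1)).filter Nat.Prime

private noncomputable def mert (n : ℕ) : ℝ := ∑ p ∈ Pset n, Real.log p / p

private lemma theta_le (n : ℕ) : ∑ p ∈ Pset n, Real.log p ≤ n * Real.log 4 := by
  have h1 : (primorial n : ℝ) ≤ (4:ℝ) ^ n := by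
    exact_mod_cast primorial_le_4_pow n
  have h2 : Real.log (primorial n) ≤ n * Real.log 4 := by
    calc Real.log (primorial n) ≤ Real.log ((4:ℝ)^n) :=
          Real.log_le_log (by exact_mod_cast primorial_pos n) h1
      _ = n * Real.log 4 := by rw [Real.log_pow]
  have h3 : Real.log (primorial n) = ∑ p ∈ Pset n, Real.log p := by
    unfold primorial Pset
    push_cast
    rw [Real.log_prod]
    intro p hp
    simp only [mem_filter] at hp
    exact_mod_cast hp.2.pos.ne'
  linarith [h3 ▸ h2]

private lemma fact_ge {p n : ℕ} (hp : p.Prime) (hpn : p ≤ n) :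
    n / p ≤ (n !).factorization p := by
  rw [← Nat.Prime.pow_dvd_iff_le_factorization hp (Nat.factorial_ne_zero n)]
  rw [Nat.Prime.pow_dvd_factorial_iff hp (Nat.lt_succ_self _)]
  have h1 : 1 ∈ Finset.Ico 1 (Nat.log p n + 1) := by
    simp [Nat.succ_le_iff, Nat.log_pos hp.one_lt hpn]
  calc n / p = n / p ^ 1 := by rw [pow_one]
    _ ≤ ∑ i ∈ Finset.Ico 1 (Nat.log p n + 1), n / p ^ i :=
        Finset.single_le_sum (f := fun i => n / p ^ i) (fun i _ => Nat.zero_le _) h1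

private lemma fact_le {p n : ℕ} (hp : p.Prime) :
    (n !).factorization p ≤ n / (p - 1) := by
  have h := (Nat.Prime.pow_dvd_factorial_iff hp (Nat.lt_succ_self _)).mp
    (Nat.ordProj_dvd (n !) p)
  exact h.trans (Nat.geom_sum_Ico_le hp.two_le _ _)

private lemma log_factorial (n : ℕ) :
    Real.log (n !) = ∑ p ∈ Pset n, ((n !).factorization p : ℝ) * Real.log p := by
  conv_lhs => rw [← Nat.factorization_prod_pow_eq_self (Nat.factorial_ne_zero n)]
  rw [Finsupp.prod]
  push_cast
  rw [Real.log_prod (by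
    intro p hp
    have hp' : p.Prime := Nat.prime_of_mem_primeFactors (by rwa [← Nat.support_factorization])
    exact pow_ne_zero _ (by exact_mod_cast hp'.pos.ne'))]
  rw [← Finset.sum_subset (s₁ := (n !).factorization.support) (s₂ := Pset n)]
  · apply Finset.sum_congr rfl
    intro p hp
    rw [Real.log_pow]
  · intro q hq
    rw [Nat.support_factorization] at hq
    have hq1 : q.Prime := Nat.prime_of_mem_primeFactors hq
    have hq2 : q ≤ n := (Nat.Prime.dvd_factorial hq1).mp (Nat.dvd_of_mem_primeFactors hq)
    simp [Pset, Nat.lt_succ_iff, hq1, hq2]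
  · intro q _ hq
    rw [Finsupp.notMem_support_iff.mp hq]
    simp

private lemma mem_Pset {p n : ℕ} (hp : p ∈ Pset n) : p.Prime ∧ p ≤ n := by
  simp only [Pset, Finset.mem_filter, Finset.mem_range, Nat.lt_succ_iff] at hp
  exact ⟨hp.2, hp.1⟩

-- placeholders for already-proven lemmas

private lemma mertens1 {n : ℕ} (hn : 1 ≤ n) : mert n ≤ Real.log n + Real.log 4 := by
  have hn0 : (0:ℝ) < n := by exact_mod_cast hn
  have key : (n:ℝ) * mert n ≤ (n:ℝ) * Real.log n + (n:ℝ) * Real.log 4 := by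
    have h1 : (n:ℝ) * mert n = ∑ p ∈ Pset n, (n:ℝ) / p * Real.log p := by
      rw [mert, Finset.mul_sum]; apply Finset.sum_congr rfl; intro p _; ring
    rw [h1]
    have h2 : ∑ p ∈ Pset n, (n:ℝ) / p * Real.log p ≤
        ∑ p ∈ Pset n, ((((n / p : ℕ) : ℝ) + 1) * Real.log p) := by
      apply Finset.sum_le_sum
      intro p hp
      obtain ⟨hpp, hpn⟩ := mem_Pset hp
      have hp0 : (0:ℝ) < p := by exact_mod_cast hpp.pos
      have hlt : (n:ℝ) < (p:ℝ) * (((n / p : ℕ) : ℝ) + 1) := by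
        exact_mod_cast Nat.lt_mul_div_succ n hpp.pos
      have : (n:ℝ) / p ≤ ((n / p : ℕ) : ℝ) + 1 := by
        rw [div_le_iff₀ hp0]; nlinarith
      exact mul_le_mul_of_nonneg_right this (Real.log_natCast_nonneg p)
    have h3 : ∑ p ∈ Pset n, (((n / p : ℕ) : ℝ) + 1) * Real.log p =
        (∑ p ∈ Pset n, ((n / p : ℕ) : ℝ) * Real.log p) + ∑ p ∈ Pset n, Real.log p := by
      rw [← Finset.sum_add_distrib]; apply Finset.sum_congr rfl; intro p _; ring
    have h4 : ∑ p ∈ Pset n, ((n / p : ℕ) : ℝ) * Real.log p ≤ Real.log (n !) := by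
      rw [log_factorial]
      apply Finset.sum_le_sum
      intro p hp
      obtain ⟨hpp, hpn⟩ := mem_Pset hp
      have := fact_ge hpp hpn
      exact mul_le_mul_of_nonneg_right (by exact_mod_cast this) (Real.log_natCast_nonneg p)
    have h5 : Real.log (n !) ≤ (n:ℝ) * Real.log n := by
      calc Real.log (n !) ≤ Real.log ((n:ℕ) ^ n : ℕ) :=
            Real.log_le_log (by exact_mod_cast Nat.factorial_pos n)
              (by exact_mod_cast Nat.factorial_le_pow n)
        _ = (n:ℝ) * Real.log n := by push_cast [Real.log_pow]; ring
    linarith [theta_le n]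
  have := (mul_le_mul_iff_right₀ hn0).mp (by linarith : (n:ℝ) * mert n ≤ (n:ℝ) * (Real.log n + Real.log 4))
  exact this

private lemma pow_le_exp_factorial : ∀ n : ℕ, (n:ℝ)^n ≤ Real.exp n * n !
  | 0 => by norm_num
  | (n+1) => by
    have ih := pow_le_exp_factorial n
    rcases Nat.eq_zero_or_pos n with h0 | hpos
    · subst h0; simp
    have hn0 : (0:ℝ) < n := by exact_mod_cast hpos
    have h1 : ((n:ℝ)+1)^n ≤ Real.exp 1 * (n:ℝ)^n := by
      have h2 : (n:ℝ)+1 ≤ (n:ℝ) * Real.exp (1/(n:ℝ)) := by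
        have := Real.add_one_le_exp (1/(n:ℝ))
        calc (n:ℝ)+1 = (n:ℝ)*(1/(n:ℝ)+1) := by field_simp; ring
          _ ≤ (n:ℝ) * Real.exp (1/(n:ℝ)) := by
              apply mul_le_mul_of_nonneg_left (by linarith) (le_of_lt hn0)
      calc ((n:ℝ)+1)^n ≤ ((n:ℝ) * Real.exp (1/(n:ℝ)))^n := by
            apply pow_le_pow_left₀ (by positivity) h2
        _ = (n:ℝ)^n * Real.exp (1/(n:ℝ))^n := mul_pow _ _ _
        _ = (n:ℝ)^n * Real.exp 1 := by
            rw [← Real.exp_nat_mul]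
            congr 1
            field_simp
        _ = Real.exp 1 * (n:ℝ)^n := by ring
    have hfact : ((n+1)! : ℝ) = ((n:ℝ)+1) * (n !) := by
      rw [Nat.factorial_succ]; push_cast; ring
    have hexp : Real.exp ((n:ℝ)+1) = Real.exp 1 * Real.exp n := by
      rw [← Real.exp_add]; ring_nf
    have hfn : (0:ℝ) < (n ! : ℝ) := by exact_mod_cast Nat.factorial_pos n
    push_cast
    calc ((n:ℝ)+1)^(n+1) = ((n:ℝ)+1) * ((n:ℝ)+1)^n := by ring
      _ ≤ ((n:ℝ)+1) * (Real.exp 1 * (n:ℝ)^n) := by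
          apply mul_le_mul_of_nonneg_left h1 (by positivity)
      _ ≤ ((n:ℝ)+1) * (Real.exp 1 * (Real.exp n * n !)) := by
          apply mul_le_mul_of_nonneg_left _ (by positivity)
          apply mul_le_mul_of_nonneg_left ih (by positivity)
      _ = Real.exp ((n:ℝ)+1) * (((n:ℝ)+1) * n !) := by rw [hexp]; ring
      _ = Real.exp ((n:ℝ)+1) * ((n+1)! : ℝ) := by rw [hfact]

private lemma log_factorial_ge {n : ℕ} (hn : 1 ≤ n) :
    (n:ℝ) * Real.log n - n ≤ Real.log (n !) := by
  have hn0 : (0:ℝ) < n := by exact_mod_cast hn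
  have h := pow_le_exp_factorial n
  have h2 : Real.log ((n:ℝ)^n) ≤ Real.log (Real.exp n * n !) :=
    Real.log_le_log (by positivity) h
  rw [Real.log_pow, Real.log_mul (Real.exp_ne_zero _) (by exact_mod_cast (Nat.factorial_pos n).ne'),
    Real.log_exp] at h2
  push_cast at h2 ⊢
  linarith

private lemma corr_sum_bound : ∃ c2 : ℝ, 0 ≤ c2 ∧ ∀ n : ℕ,
    ∑ p ∈ Pset n, Real.log p / (p * ((p:ℝ) - 1)) ≤ c2 := by
  set g : ℕ → ℝ := fun m => 4 * (1 / (m:ℝ) ^ ((3:ℝ)/2)) with hg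
  have hsum : Summable g := (Real.summable_one_div_nat_rpow.2 (by norm_num)).mul_left 4
  have hgnn : ∀ m, 0 ≤ g m := by intro m; simp only [hg]; positivity
  refine ⟨∑' m, g m, tsum_nonneg hgnn, fun n => ?_⟩
  have hle : ∑ p ∈ Pset n, Real.log p / (p * ((p:ℝ) - 1)) ≤ ∑ p ∈ Pset n, g p := by
    apply Finset.sum_le_sum
    intro p hp
    obtain ⟨hpp, -⟩ := mem_Pset hp
    have hp2 : (2:ℝ) ≤ p := by exact_mod_cast hpp.two_le
    have hp0 : (0:ℝ) < p := by linarith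
    have hsq : Real.sqrt p * Real.sqrt p = p := Real.mul_self_sqrt (le_of_lt hp0)
    have hsqpos : 0 < Real.sqrt p := Real.sqrt_pos.2 hp0
    have hlog : Real.log p ≤ 2 * Real.sqrt p := by
      have h1 : Real.log (Real.sqrt p) ≤ Real.sqrt p - 1 :=
        Real.log_le_sub_one_of_pos hsqpos
      have h2 : Real.log (Real.sqrt p) = Real.log p / 2 := Real.log_sqrt (le_of_lt hp0)
      linarith
    have hrpow : (p:ℝ) ^ ((3:ℝ)/2) = p * Real.sqrt p := by
      have : ((3:ℝ)/2) = 1 + 1/2 := by norm_num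
      rw [this, Real.rpow_add hp0, Real.rpow_one, ← Real.sqrt_eq_rpow]
    have hgp : g p = 4 / ((p:ℝ) * Real.sqrt p) := by
      simp only [hg, hrpow]; ring
    rw [hgp]
    rw [div_le_div_iff₀ (by nlinarith) (by positivity)]
    have hstep : Real.log p * ((p:ℝ) * Real.sqrt p) ≤
        2 * Real.sqrt p * ((p:ℝ) * Real.sqrt p) :=
      mul_le_mul_of_nonneg_right hlog (by positivity)
    have hstep2 : 2 * Real.sqrt p * ((p:ℝ) * Real.sqrt p) = 2 * p * (Real.sqrt p * Real.sqrt p) := by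
      ring
    rw [hstep2, hsq] at hstep
    nlinarith [hstep, hp2]
  exact hle.trans (Summable.sum_le_tsum _ (fun m _ => hgnn m) hsum)

private lemma mertens2 : ∃ b2 : ℝ, 0 ≤ b2 ∧ ∀ n : ℕ, 1 ≤ n →
    Real.log n - b2 ≤ mert n := by
  obtain ⟨c2, hc2nn, hc2⟩ := corr_sum_bound
  refine ⟨1 + c2, by linarith, fun n hn => ?_⟩
  have hn0 : (0:ℝ) < n := by exact_mod_cast hn
  have key : (n:ℝ) * Real.log n - n ≤ (n:ℝ) * mert n + (n:ℝ) * c2 := by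
    have h1 : Real.log (n !) ≤ ∑ p ∈ Pset n, ((n:ℝ) / ((p:ℝ) - 1)) * Real.log p := by
      rw [log_factorial]
      apply Finset.sum_le_sum
      intro p hp
      obtain ⟨hpp, hpn⟩ := mem_Pset hp
      have hp2 : (2:ℝ) ≤ p := by exact_mod_cast hpp.two_le
      have hcast : (((n / (p-1) : ℕ)) : ℝ) ≤ (n:ℝ) / ((p:ℝ) - 1) := by
        have h3 := Nat.cast_div_le (α := ℝ) (m := n) (n := p - 1)
        have h4 : ((p - 1 : ℕ) : ℝ) = (p:ℝ) - 1 := by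
          have : 1 ≤ p := hpp.one_lt.le
          push_cast [this]; ring
        rwa [h4] at h3
      have := fact_le (n := n) hpp
      have h5 : (((n !).factorization p : ℕ) : ℝ) ≤ (((n / (p-1) : ℕ)) : ℝ) := by
        exact_mod_cast this
      exact mul_le_mul_of_nonneg_right (h5.trans hcast) (Real.log_natCast_nonneg p)
    have h2 : ∑ p ∈ Pset n, ((n:ℝ) / ((p:ℝ) - 1)) * Real.log p =
        (n:ℝ) * mert n + (n:ℝ) * ∑ p ∈ Pset n, Real.log p / (p * ((p:ℝ) - 1)) := by
      rw [mert, Finset.mul_sum, Finset.mul_sum, ← Finset.sum_add_distrib]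
      apply Finset.sum_congr rfl
      intro p hp
      obtain ⟨hpp, -⟩ := mem_Pset hp
      have hp2 : (2:ℝ) ≤ p := by exact_mod_cast hpp.two_le
      have hne1 : (p:ℝ) - 1 ≠ 0 := by linarith
      have hne0 : (p:ℝ) ≠ 0 := by linarith
      field_simp
      ring
    have h3 := log_factorial_ge hn
    have h4 := hc2 n
    have h5 : (n:ℝ) * ∑ p ∈ Pset n, Real.log p / (p * ((p:ℝ) - 1)) ≤ (n:ℝ) * c2 :=
      mul_le_mul_of_nonneg_left h4 (le_of_lt hn0)
    linarith
  have h6 : (n:ℝ) * (Real.log n - (1 + c2)) ≤ (n:ℝ) * mert n := by nlinarith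
  exact le_of_mul_le_mul_left (by linarith) hn0

private noncomputable def cfun (m : ℕ) : ℝ := if m.Prime then 1/(m:ℝ) else 0

private noncomputable def Phi (n : ℕ) : ℝ :=
  mert n / Real.log (n+1) + Real.log (Real.log (n+1)) - Real.log 4 / Real.log (n+1)

private lemma mert_succ (n : ℕ) : mert (n+1) = mert n + cfun (n+1) * Real.log (n+1) := by
  unfold mert Pset cfun
  rw [Finset.range_add_one (n := n+1), Finset.filter_insert]
  by_cases hp : (n+1).Prime
  · rw [if_pos hp, Finset.sum_insert (by simp), if_pos hp]
    push_cast
    ring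
  · rw [if_neg hp, if_neg hp]
    ring

private lemma phi_step {m : ℕ} (hm : 3 ≤ m) : cfun m ≤ Phi m - Phi (m-1) := by
  obtain ⟨n, rfl⟩ : ∃ n, m = n + 1 := ⟨m - 1, by omega⟩
  simp only [Nat.add_sub_cancel]
  have hn2 : 2 ≤ n := by omega
  have hL1 : (1:ℝ) < Real.log (n+1) := by
    have : (Real.exp 1) < (n:ℝ) + 1 := by
      have := Real.exp_one_lt_d9
      have : Real.exp 1 < 2.7182818286 := this
      have hn3 : (3:ℝ) ≤ (n:ℝ) + 1 := by
        have : (2:ℝ) ≤ (n:ℝ) := by exact_mod_cast hn2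
        linarith
      linarith
    calc (1:ℝ) = Real.log (Real.exp 1) := (Real.log_exp 1).symm
      _ < Real.log ((n:ℝ)+1) := Real.log_lt_log (Real.exp_pos 1) this
  have hL2 : (1:ℝ) < Real.log (n+2) := by
    apply lt_of_lt_of_le hL1
    apply Real.log_le_log (by positivity)
    push_cast; linarith
  have hL1p : (0:ℝ) < Real.log (n+1) := by linarith
  have hL2p : (0:ℝ) < Real.log (n+2) := by linarith
  have hL12 : Real.log (n+1) ≤ Real.log (n+2) := by
    apply Real.log_le_log (by positivity); push_cast; linarith
  set L1 := Real.log ((n:ℝ)+1)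
  set L2 := Real.log ((n:ℝ)+2)
  have hkey : 1 - L1 / L2 ≤ Real.log L2 - Real.log L1 := by
    have h1 : Real.log (L1 / L2) ≤ L1 / L2 - 1 :=
      Real.log_le_sub_one_of_pos (by positivity)
    rw [Real.log_div (by positivity) (by positivity)] at h1
    linarith
  have hδ : (0:ℝ) ≤ 1 / L1 - 1 / L2 := by
    have : 1 / L2 ≤ 1 / L1 := one_div_le_one_div_of_le hL1p hL12
    linarith
  have hA : mert (n+1) ≤ L1 + Real.log 4 := by
    have := mertens1 (n := n+1) (by omega)
    have hcast : ((n+1 : ℕ) : ℝ) = (n:ℝ)+1 := by push_cast; ring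
    rw [hcast] at this
    exact this
  -- key inequality: mert (n+1) * δ ≤ (log L2 - log L1) + log 4 * δ
  have hmain : mert (n+1) * (1/L1 - 1/L2) ≤ (Real.log L2 - Real.log L1) + Real.log 4 * (1/L1 - 1/L2) := by
    have h1 : mert (n+1) * (1/L1 - 1/L2) ≤ (L1 + Real.log 4) * (1/L1 - 1/L2) :=
      mul_le_mul_of_nonneg_right hA hδ
    have h2 : L1 * (1/L1 - 1/L2) = 1 - L1/L2 := by field_simp
    nlinarith [hkey]
  -- now unfold Phi
  unfold Phi
  have hc2 : ((n+1 : ℕ) : ℝ) = (n:ℝ)+1 := by push_cast; ring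
  have hc3 : ((n : ℕ) : ℝ) + 1 = (n:ℝ)+1 := rfl
  have hms := mert_succ n
  have hcf : cfun (n+1) * Real.log ((n:ℝ)+1) ≥ 0 := by
    unfold cfun
    by_cases hp : (n+1).Prime
    · rw [if_pos hp]; positivity
    · rw [if_neg hp]; simp
  -- rewrite goal
  rw [hc2]
  push_cast
  rw [show ((n:ℝ)+1+1) = (n:ℝ)+2 from by ring]
  rw [hms]
  rw [show Real.log ((n:ℝ)+1) = L1 from rfl, show Real.log ((n:ℝ)+2) = L2 from rfl]
  set a := cfun (n+1)
  have ha : a * L1 ≥ 0 := by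
    have := hcf
    convert this using 2
  -- goal: a ≤ (mert n + a*L1)/L2 + log L2 - log4/L2 - (mert n/L1 + log L1 - log4/L1)
  have hexpand : (mert n + a*L1)/L2 + Real.log L2 - Real.log 4/L2
      - (mert n/L1 + Real.log L1 - Real.log 4/L1)
      = a - (mert n + a*L1) * (1/L1 - 1/L2) + (Real.log L2 - Real.log L1)
        + Real.log 4 * (1/L1 - 1/L2) - a + a*L1/L1 := by
    field_simp
    ring
  have hL1ne : L1 ≠ 0 := ne_of_gt hL1p
  have haL1 : a * L1 / L1 = a := by field_simp
  have hmert_eq : mert n + a * L1 = mert (n+1) := hms.symm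
  rw [← hmert_eq] at hmain
  linarith [hmain, hexpand, haL1]

private lemma telescope {N : ℕ} (hN : 2 ≤ N) : ∀ M, N ≤ M →
    ∑ m ∈ Finset.Ico (N+1) (M+1), cfun m ≤ Phi M - Phi N := by
  intro M
  induction M with
  | zero => intro h; omega
  | succ M ih =>
    intro hNM
    rcases Nat.eq_or_lt_of_le hNM with h | h
    · subst h; simp
    have hNM' : N ≤ M := by omega
    have h1 : N + 1 ≤ M + 1 := by omega
    rw [Finset.sum_Ico_succ_top h1]
    have h2 := phi_step (m := M+1) (by omega)
    simp only [Nat.add_sub_cancel] at h2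
    linarith [ih hNM']

private lemma log_two_pos : (0:ℝ) < Real.log 2 := Real.log_pos (by norm_num)

private lemma loglog_mono {a b : ℕ} (ha : 2 ≤ a) (hab : a ≤ b) :
    Real.log (Real.log a) ≤ Real.log (Real.log b) := by
  have h1 : (0:ℝ) < Real.log a := by
    apply Real.log_pos; exact_mod_cast by omega
  apply Real.log_le_log h1
  apply Real.log_le_log (by positivity)
  exact_mod_cast hab

private lemma tail_bound : ∃ D : ℝ, 0 ≤ D ∧ ∀ N M : ℕ, 2 ≤ N → N ≤ M →
    ∑ m ∈ Finset.Ico (N+1) (M+1), cfun m ≤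
      Real.log (Real.log (M+1)) - Real.log (Real.log N) + D := by
  obtain ⟨b2, hb2nn, hb2⟩ := mertens2
  refine ⟨1 + (b2 + Real.log 4 + Real.log 4) / Real.log 2, by positivity, ?_⟩
  intro N M hN hNM
  push_cast
  have hM2 : 2 ≤ M := le_trans hN hNM
  have hlogN1 : Real.log 2 ≤ Real.log ((N:ℝ)+1) := by
    apply Real.log_le_log (by norm_num)
    have : (2:ℝ) ≤ N := by exact_mod_cast hN
    linarith
  have hlogN1p : (0:ℝ) < Real.log ((N:ℝ)+1) := lt_of_lt_of_le log_two_pos hlogN1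
  have hlogM1 : Real.log 2 ≤ Real.log ((M:ℝ)+1) := by
    apply Real.log_le_log (by norm_num)
    have : (2:ℝ) ≤ M := by exact_mod_cast hM2
    linarith
  have hlogM1p : (0:ℝ) < Real.log ((M:ℝ)+1) := lt_of_lt_of_le log_two_pos hlogM1
  have hPhiM : Phi M ≤ 1 + Real.log (Real.log ((M:ℝ)+1)) := by
    unfold Phi
    have h1 : mert M ≤ Real.log M + Real.log 4 := mertens1 (by omega)
    have h2 : Real.log (M:ℝ) ≤ Real.log ((M:ℝ)+1) := by
      apply Real.log_le_log (by exact_mod_cast by omega : (0:ℝ) < (M:ℝ))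
      linarith
    have h3 : mert M / Real.log ((M:ℝ)+1) ≤ (Real.log M + Real.log 4) / Real.log ((M:ℝ)+1) :=
      div_le_div_of_nonneg_right ?_ hlogM1p.le
    · have h4 : (Real.log M + Real.log 4) / Real.log ((M:ℝ)+1)
          = Real.log M / Real.log ((M:ℝ)+1) + Real.log 4 / Real.log ((M:ℝ)+1) := by ring
      have h5 : Real.log M / Real.log ((M:ℝ)+1) ≤ 1 := by
        rw [div_le_one hlogM1p]; linarith
      linarith
    · exact h1
  have hPhiN : -(Phi N) ≤ (b2 + Real.log 4) / Real.log 2 - Real.log (Real.log (N:ℝ)) := by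
    unfold Phi
    have h1 : Real.log (N:ℝ) - b2 ≤ mert N := hb2 N (by omega)
    have hlogNpos : (0:ℝ) < Real.log (N:ℝ) := by
      apply Real.log_pos; exact_mod_cast by omega
    have h2 : Real.log (Real.log (N:ℝ)) ≤ Real.log (Real.log ((N:ℝ)+1)) := by
      apply Real.log_le_log hlogNpos
      apply Real.log_le_log (by positivity)
      linarith
    have h3 : -(mert N / Real.log ((N:ℝ)+1)) ≤ (b2 - Real.log (N:ℝ)) / Real.log ((N:ℝ)+1) := by
      rw [neg_div' ]
      apply div_le_div_of_nonneg_right (by linarith) hlogN1p.le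
    have h4 : (b2 - Real.log (N:ℝ)) / Real.log ((N:ℝ)+1) ≤ b2 / Real.log ((N:ℝ)+1) := by
      apply div_le_div_of_nonneg_right (by linarith) hlogN1p.le
    have h5 : b2 / Real.log ((N:ℝ)+1) ≤ b2 / Real.log 2 :=
      div_le_div_of_nonneg_left hb2nn log_two_pos hlogN1
    have h6 : Real.log 4 / Real.log ((N:ℝ)+1) ≤ Real.log 4 / Real.log 2 := by
      apply div_le_div_of_nonneg_left (by positivity) log_two_pos hlogN1
    have hsplit : (b2 + Real.log 4)/Real.log 2 = b2/Real.log 2 + Real.log 4/Real.log 2 :=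
      add_div _ _ _
    linarith
  have htel := telescope hN M hNM
  calc ∑ m ∈ Finset.Ico (N+1) (M+1), cfun m ≤ Phi M - Phi N := htel
    _ ≤ 1 + Real.log (Real.log ((M:ℝ)+1)) + ((b2 + Real.log 4) / Real.log 2 - Real.log (Real.log (N:ℝ))) := by
        linarith
    _ ≤ Real.log (Real.log ((M:ℝ)+1)) - Real.log (Real.log (N:ℝ))
        + (1 + (b2 + Real.log 4 + Real.log 4) / Real.log 2) := by
        have : (0:ℝ) ≤ Real.log 4 / Real.log 2 := by positivity
        have hsplit : (b2 + Real.log 4 + Real.log 4) / Real.log 2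
            = (b2 + Real.log 4)/Real.log 2 + Real.log 4 / Real.log 2 := by ring
        linarith

private lemma f_nonneg {α : ℝ} (hα : 0 ≤ α) {p : ℕ} (hp : 1 ≤ p) :
    0 ≤ 1 / (p : ℝ) - 1 / (p : ℝ) ^ (1 + α) := by
  have hp1 : (1:ℝ) ≤ p := by exact_mod_cast hp
  have h1 : (p:ℝ) ^ (1:ℝ) ≤ (p:ℝ) ^ (1 + α) :=
    Real.rpow_le_rpow_of_exponent_le hp1 (by linarith)
  rw [Real.rpow_one] at h1
  have h2 : 1 / (p:ℝ) ^ (1+α) ≤ 1 / (p:ℝ) :=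
    one_div_le_one_div_of_le (by linarith) h1
  linarith

private lemma f_le_one_div {α : ℝ} {p : ℕ} :
    1 / (p : ℝ) - 1 / (p : ℝ) ^ (1 + α) ≤ 1 / (p:ℝ) := by
  have : (0:ℝ) ≤ 1 / (p:ℝ) ^ (1+α) := by positivity
  linarith

private lemma f_le_alpha {α : ℝ} (hα : 0 ≤ α) {p : ℕ} (hp : 1 ≤ p) :
    1 / (p : ℝ) - 1 / (p : ℝ) ^ (1 + α) ≤ α * Real.log p / p := by
  have hp0 : (0:ℝ) < p := by exact_mod_cast hp
  have hkey : 1 - Real.exp (-(α * Real.log p)) ≤ α * Real.log p := by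
    have := Real.add_one_le_exp (-(α * Real.log p))
    linarith
  have hrw : (p:ℝ) ^ (1+α) = p * (p:ℝ) ^ α := by
    rw [Real.rpow_add hp0, Real.rpow_one]
  have hpa : (p:ℝ) ^ α = Real.exp (α * Real.log p) := by
    rw [Real.rpow_def_of_pos hp0]; ring_nf
  have hpapos : (0:ℝ) < (p:ℝ) ^ α := by rw [hpa]; exact Real.exp_pos _
  have heq : 1 / (p : ℝ) - 1 / (p : ℝ) ^ (1 + α)
      = (1/p) * (1 - Real.exp (-(α * Real.log p))) := by
    rw [hrw, hpa, Real.exp_neg]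
    field_simp
  rw [heq]
  calc (1/(p:ℝ)) * (1 - Real.exp (-(α * Real.log p))) ≤ (1/(p:ℝ)) * (α * Real.log p) :=
        mul_le_mul_of_nonneg_left hkey (by positivity)
    _ = α * Real.log p / p := by ring

private lemma sum_split {K M : ℕ} (hKM : K ≤ M) (f : ℕ → ℝ) :
    ∑ p ∈ Pset M, f p = ∑ p ∈ Pset K, f p
      + ∑ m ∈ Finset.Ico (K+1) (M+1), (if m.Prime then f m else 0) := by
  have h1 : Finset.range (M+1) = Finset.range (K+1) ∪ Finset.Ico (K+1) (M+1) := by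
    rw [Finset.range_eq_Ico]
    rw [← Finset.Ico_union_Ico_eq_Ico (Nat.zero_le (K+1)) (by omega : K+1 ≤ M+1), Finset.range_eq_Ico]
  unfold Pset
  have hdisj : Disjoint ((Finset.range (K+1)).filter Nat.Prime)
      ((Finset.Ico (K+1) (M+1)).filter Nat.Prime) :=
    Finset.disjoint_filter_filter
      (Finset.disjoint_left.2 (by intro a ha ha2; simp at ha ha2; omega))
  rw [h1, Finset.filter_union, Finset.sum_union hdisj, Finset.sum_filter (s := Finset.Ico (K+1) (M+1))]

theorem prime_sum_one_div_sub_bound :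
    ∃ C : ℝ, ∀ x : ℝ, 2 ≤ x → ∀ α : ℝ, 1 / Real.log x ≤ α →
      ∑ p ∈ (Finset.range (⌊x⌋₊ + 1)).filter Nat.Prime,
          (1 / (p : ℝ) - 1 / (p : ℝ) ^ (1 + α))
        ≤ 1 + Real.log (α * Real.log x) + C := by
  obtain ⟨D, hD0, hD⟩ := tail_bound
  refine ⟨D + Real.log 4 + 2*Real.log 2 + |Real.log (Real.log 2)| + Real.log (Real.log 3) + 1,
    fun x hx α hα => ?_⟩
  have hx1 : (1:ℝ) < x := by linarith
  have hlogx : 0 < Real.log x := Real.log_pos hx1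
  have hlog2x : Real.log 2 ≤ Real.log x := Real.log_le_log (by norm_num) hx
  have hα0 : 0 < α := lt_of_lt_of_le (by positivity) hα
  have hαlogx : 1 ≤ α * Real.log x := by
    rw [div_le_iff₀ hlogx] at hα; linarith
  have hlogα0 : 0 ≤ Real.log (α * Real.log x) := Real.log_nonneg hαlogx
  have hlogmul : Real.log (α * Real.log x) = Real.log α + Real.log (Real.log x) :=
    Real.log_mul (ne_of_gt hα0) (ne_of_gt hlogx)
  have hlog2nn : (0:ℝ) ≤ Real.log 2 := Real.log_nonneg (by norm_num)
  have hlog4nn : (0:ℝ) ≤ Real.log 4 := Real.log_nonneg (by norm_num)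
  have hlog3gt1 : (1:ℝ) < Real.log 3 := by
    have h1 : Real.exp 1 < 3 := by
      have := Real.exp_one_lt_d9; linarith
    calc (1:ℝ) = Real.log (Real.exp 1) := (Real.log_exp 1).symm
      _ < Real.log 3 := Real.log_lt_log (Real.exp_pos 1) h1
  have hloglog3nn : (0:ℝ) ≤ Real.log (Real.log 3) := Real.log_nonneg hlog3gt1.le
  set M := ⌊x⌋₊ with hMdef
  have hM2 : 2 ≤ M := Nat.le_floor (by exact_mod_cast hx)
  have hMx : (M:ℝ) ≤ x := Nat.floor_le (by linarith)
  have hM2R : (2:ℝ) ≤ (M:ℝ) := by exact_mod_cast hM2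
  have hlogM1pos : 0 < Real.log ((M:ℝ)+1) := Real.log_pos (by linarith)
  have hllM1 : Real.log (Real.log ((M:ℝ)+1)) ≤ Real.log 2 + Real.log (Real.log x) := by
    have h1 : (M:ℝ)+1 ≤ 2*x := by linarith
    have h2 : Real.log ((M:ℝ)+1) ≤ Real.log 2 + Real.log x := by
      calc Real.log ((M:ℝ)+1) ≤ Real.log (2*x) := Real.log_le_log (by positivity) h1
        _ = Real.log 2 + Real.log x := Real.log_mul (by norm_num) (by linarith)
    calc Real.log (Real.log ((M:ℝ)+1)) ≤ Real.log (2 * Real.log x) := by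
          apply Real.log_le_log hlogM1pos; linarith
      _ = Real.log 2 + Real.log (Real.log x) := Real.log_mul (by norm_num) (ne_of_gt hlogx)
  have hPset : (Finset.range (⌊x⌋₊ + 1)).filter Nat.Prime = Pset M := rfl
  rw [hPset]
  have hcompare : ∀ K, ∀ m ∈ Finset.Ico (K+1) (M+1),
      (if m.Prime then 1/(m:ℝ) - 1/(m:ℝ)^(1+α) else 0) ≤ cfun m := by
    intro K m _
    unfold cfun
    by_cases hp : m.Prime
    · simp only [if_pos hp]; exact f_le_one_div
    · simp only [if_neg hp]; exact le_refl 0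
  by_cases hcase : Real.exp (1/α) < 3
  · -- α large case : N = 2
    have hinvα : 1/α < Real.log 3 := by
      have := Real.log_lt_log (Real.exp_pos _) hcase
      rwa [Real.log_exp] at this
    rw [sum_split hM2]
    have hhead : ∑ p ∈ Pset 2, (1/(p:ℝ) - 1/(p:ℝ)^(1+α)) ≤ 1/2 := by
      have h2 : Pset 2 = {2} := by decide
      rw [h2, Finset.sum_singleton]
      have := f_le_one_div (α := α) (p := 2)
      norm_num at this ⊢
      linarith
    have htail : ∑ m ∈ Finset.Ico (2+1) (M+1), (if m.Prime then 1/(m:ℝ) - 1/(m:ℝ)^(1+α) else 0)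
        ≤ Real.log (Real.log ((M:ℝ)+1)) - Real.log (Real.log 2) + D := by
      calc ∑ m ∈ Finset.Ico (2+1) (M+1), (if m.Prime then 1/(m:ℝ) - 1/(m:ℝ)^(1+α) else 0)
          ≤ ∑ m ∈ Finset.Ico (2+1) (M+1), cfun m := Finset.sum_le_sum (hcompare 2)
        _ ≤ Real.log (Real.log (((M:ℕ):ℝ)+1)) - Real.log (Real.log ((2:ℕ):ℝ)) + D :=
            hD 2 M le_rfl hM2
        _ = Real.log (Real.log ((M:ℝ)+1)) - Real.log (Real.log 2) + D := by norm_num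
    have hinvlog : Real.log (1/α) ≤ Real.log (Real.log 3) :=
      Real.log_le_log (by positivity) hinvα.le
    have hloginv : Real.log (1/α) = -Real.log α := by
      rw [one_div, Real.log_inv]
    have habs : -|Real.log (Real.log 2)| ≤ Real.log (Real.log 2) := neg_abs_le _
    linarith [hhead, htail, hllM1, hlogmul]
  · -- α small case : N = floor(exp(1/α)) ≥ 3
    push_neg at hcase
    set y := Real.exp (1/α) with hydef
    set N := ⌊y⌋₊ with hNdef
    have hN3 : 3 ≤ N := Nat.le_floor (by exact_mod_cast hcase)
    have hN2 : 2 ≤ N := by omega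
    have hN3R : (3:ℝ) ≤ (N:ℝ) := by exact_mod_cast hN3
    have hNy : (N:ℝ) ≤ y := Nat.floor_le (by positivity)
    have hNy2 : y/2 ≤ (N:ℝ) := by
      have h1 : y - 1 < (N:ℝ) := Nat.sub_one_lt_floor y
      have h2 : (2:ℝ) ≤ y := by linarith
      linarith
    have hlogN_le : Real.log N ≤ 1/α := by
      calc Real.log N ≤ Real.log y := Real.log_le_log (by linarith) hNy
        _ = 1/α := Real.log_exp _
    have hlogNpos : 0 < Real.log (N:ℝ) := Real.log_pos (by linarith)
    have hlog3le : Real.log 3 ≤ 1/α := by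
      calc Real.log 3 ≤ Real.log y := Real.log_le_log (by norm_num) hcase
        _ = 1/α := Real.log_exp _
    have hα1 : α ≤ 1 := by
      by_contra h
      push_neg at h
      have : 1/α < 1 := by rw [div_lt_one hα0]; linarith
      linarith
    have hlogN_ge : 1/(2*α) ≤ Real.log (N:ℝ) := by
      rcases le_or_gt (2*Real.log 2) (1/α) with h | h
      · have h1 : Real.log (y/2) ≤ Real.log (N:ℝ) :=
          Real.log_le_log (by positivity) hNy2
        have h2 : Real.log (y/2) = 1/α - Real.log 2 := by
          rw [Real.log_div (Real.exp_ne_zero _) (by norm_num), Real.log_exp]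
        have h3 : 1/(2*α) = 1/α - 1/(2*α) := by field_simp; ring
        have h4 : Real.log 2 ≤ 1/(2*α) := by
          have : 1/(2*α) = (1/α)/2 := by field_simp
          linarith [h]
        linarith
      · have h1 : 1/(2*α) < Real.log 2 := by
          have h2 : 1/(2*α) = (1/α)/2 := by field_simp
          linarith
        have h3 : Real.log 2 < Real.log 3 := Real.log_lt_log (by norm_num) (by norm_num)
        calc 1/(2*α) ≤ Real.log 3 := by linarith
          _ ≤ Real.log (N:ℝ) := Real.log_le_log (by norm_num) hN3R
    set K := min N M with hKdef
    have hKM : K ≤ M := min_le_right _ _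
    have hK2 : 2 ≤ K := le_min hN2 hM2
    have hK1R : (1:ℝ) ≤ (K:ℝ) := by exact_mod_cast by omega
    have hKN : (K:ℝ) ≤ (N:ℝ) := by exact_mod_cast min_le_left N M
    rw [sum_split hKM]
    have hhead : ∑ p ∈ Pset K, (1/(p:ℝ) - 1/(p:ℝ)^(1+α)) ≤ 1 + Real.log 4 := by
      have h1 : ∑ p ∈ Pset K, (1/(p:ℝ) - 1/(p:ℝ)^(1+α)) ≤ ∑ p ∈ Pset K, α * Real.log p / p := by
        apply Finset.sum_le_sum
        intro p hp
        exact f_le_alpha hα0.le (mem_Pset hp).1.one_lt.le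
      have h2 : ∑ p ∈ Pset K, α * Real.log p / p = α * mert K := by
        rw [mert, Finset.mul_sum]
        exact Finset.sum_congr rfl fun p _ => by ring
      have h3 : α * mert K ≤ α * (Real.log K + Real.log 4) :=
        mul_le_mul_of_nonneg_left (mertens1 (by omega)) hα0.le
      have h4 : Real.log (K:ℝ) ≤ 1/α := by
        calc Real.log (K:ℝ) ≤ Real.log (N:ℝ) := Real.log_le_log (by linarith) hKN
          _ ≤ 1/α := hlogN_le
      have h5 : α * (Real.log K + Real.log 4) ≤ 1 + Real.log 4 := by
        have h6 : α * Real.log (K:ℝ) ≤ 1 := by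
          calc α * Real.log (K:ℝ) ≤ α * (1/α) := mul_le_mul_of_nonneg_left h4 hα0.le
            _ = 1 := by field_simp
        nlinarith [hlog4nn, hα1, hα0.le]
      linarith
    by_cases hNM : N ≤ M
    · have hKN' : K = N := min_eq_left hNM
      have htail : ∑ m ∈ Finset.Ico (K+1) (M+1), (if m.Prime then 1/(m:ℝ) - 1/(m:ℝ)^(1+α) else 0)
          ≤ Real.log (Real.log ((M:ℝ)+1)) - Real.log (Real.log (N:ℝ)) + D := by
        rw [hKN']
        calc ∑ m ∈ Finset.Ico (N+1) (M+1), (if m.Prime then 1/(m:ℝ) - 1/(m:ℝ)^(1+α) else 0)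
            ≤ ∑ m ∈ Finset.Ico (N+1) (M+1), cfun m := Finset.sum_le_sum (hcompare N)
          _ ≤ Real.log (Real.log (((M:ℕ):ℝ)+1)) - Real.log (Real.log ((N:ℕ):ℝ)) + D :=
              hD N M hN2 hNM
      have hllN : -Real.log (Real.log (N:ℝ)) ≤ Real.log 2 + Real.log α := by
        have h1 : Real.log (1/(2*α)) ≤ Real.log (Real.log (N:ℝ)) :=
          Real.log_le_log (by positivity) hlogN_ge
        have h2 : Real.log (1/(2*α)) = -(Real.log 2 + Real.log α) := by
          rw [one_div, Real.log_inv, Real.log_mul (by norm_num) (ne_of_gt hα0)]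
        linarith
      have habs : (0:ℝ) ≤ |Real.log (Real.log 2)| := abs_nonneg _
      linarith [hhead, htail, hllM1, hlogmul]
    · have hKM' : K = M := min_eq_right (le_of_not_ge hNM)
      have htail : ∑ m ∈ Finset.Ico (K+1) (M+1), (if m.Prime then 1/(m:ℝ) - 1/(m:ℝ)^(1+α) else 0) = 0 := by
        rw [hKM', Finset.Ico_self, Finset.sum_empty]
      have habs : (0:ℝ) ≤ |Real.log (Real.log 2)| := abs_nonneg _
      linarith [hhead, htail]
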